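/- Let m ≥ 2, c ∈ ℝ, λ_1, ..., λ_m ∈ ℝ, f = (1/m) Σ λ_i, a = Σ λ_i². Then −(1/2) Σ_{i,j} (λ_i − λ_j)² (c + λ_i λ_j) ≤ (a − m f²) (a − m c − 2 m f² + (m(m−2)/√(m(m−1))) |f| √(a − m f²)). -/

import Mathlib

/-!
Write `μᵢ = λᵢ - f`, so that `∑ μᵢ = 0` and `∑ μᵢ² = a - m f²`. Expanding the double sum expresses
it through the power sums of the `λᵢ`, and after centring, the claim reduces to
`-m f ∑ μᵢ³ ≤ m |f| (m - 2) / √(m (m - 1)) · b √b` with `b = ∑ μᵢ²`, which is Okumura's inequality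
for the traceless vector `μ`. Okumura's inequality itself follows from the Cauchy–Schwarz bound
`μᵢ ≤ (m - 1) t`, `t = √(b / (m (m - 1)))`, and the cubic estimate
`x³ ≤ (m - 3) t x² + (2m - 3) t² x + (m - 1) t³` for `x ≤ (m - 1) t`, summed over `x = μᵢ`.
-/

open Finset

namespace Okumura

variable {ι : Type*} [Fintype ι]

lemma card_mul_sq_le_of_sum_eq_zero [DecidableEq ι] {μ : ι → ℝ} (h0 : ∑ i, μ i = 0) (i : ι) :
    Fintype.card ι * μ i ^ 2 ≤ (Fintype.card ι - 1) * ∑ j, μ j ^ 2 := by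
  have hrest : ∑ j ∈ univ.erase i, μ j = -μ i := by
    rw [sum_erase_eq_sub (mem_univ i), h0, zero_sub]
  have hrest_sq : ∑ j ∈ univ.erase i, μ j ^ 2 = ∑ j, μ j ^ 2 - μ i ^ 2 :=
    sum_erase_eq_sub (mem_univ i)
  have hcard : ((univ.erase i).card : ℝ) = Fintype.card ι - 1 := by
    rw [card_erase_of_mem (mem_univ i), card_univ,
      Nat.cast_sub (Fintype.card_pos_iff.mpr ⟨i⟩)]
    simp
  have hcs := sq_sum_le_card_mul_sum_sq (s := univ.erase i) (f := μ)
  rw [hrest, hrest_sq, hcard, neg_sq] at hcs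
  linarith

lemma cube_le_of_le {n t x : ℝ} (hx : x ≤ (n - 1) * t) :
    x ^ 3 ≤ (n - 3) * t * x ^ 2 + (2 * n - 3) * t ^ 2 * x + (n - 1) * t ^ 3 := by
  have : 0 ≤ ((n - 1) * t - x) * (x + t) ^ 2 := mul_nonneg (sub_nonneg.mpr hx) (sq_nonneg _)
  linarith

lemma sum_cube_le_of_le {μ : ι → ℝ} (h0 : ∑ i, μ i = 0) {t : ℝ}
    (hμ : ∀ i, μ i ≤ (Fintype.card ι - 1) * t) :
    ∑ i, μ i ^ 3 ≤ (Fintype.card ι - 3) * t * ∑ i, μ i ^ 2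
      + Fintype.card ι * (Fintype.card ι - 1) * t ^ 3 := by
  set n : ℝ := (Fintype.card ι : ℝ)
  calc ∑ i, μ i ^ 3
      ≤ ∑ i, ((n - 3) * t * μ i ^ 2 + (2 * n - 3) * t ^ 2 * μ i + (n - 1) * t ^ 3) :=
        sum_le_sum fun i _ => cube_le_of_le (hμ i)
    _ = (n - 3) * t * ∑ i, μ i ^ 2 + n * (n - 1) * t ^ 3 := by
        simp only [sum_add_distrib, ← mul_sum, sum_const, card_univ, nsmul_eq_mul, h0]
        ring

theorem sum_cube_le (hn : 2 ≤ Fintype.card ι) {μ : ι → ℝ} (h0 : ∑ i, μ i = 0) :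
    ∑ i, μ i ^ 3 ≤ (Fintype.card ι - 2) / √(Fintype.card ι * (Fintype.card ι - 1)) *
      ((∑ i, μ i ^ 2) * √(∑ i, μ i ^ 2)) := by
  classical
  set n : ℝ := (Fintype.card ι : ℝ)
  set b := ∑ i, μ i ^ 2
  have hn' : (2 : ℝ) ≤ n := by simp only [n]; exact_mod_cast hn
  have hK : 0 < n * (n - 1) := by nlinarith
  have hb : 0 ≤ b := sum_nonneg fun i _ => sq_nonneg _
  set t := √b / √(n * (n - 1))
  have ht : 0 ≤ t := by positivity
  have hbt : n * (n - 1) * t ^ 2 = b := by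
    have : n - 1 ≠ 0 := by linarith
    rw [div_pow, Real.sq_sqrt hb, Real.sq_sqrt hK.le]
    field_simp
  have hμ : ∀ i, μ i ≤ (n - 1) * t := fun i => by
    have hsq : μ i ^ 2 ≤ ((n - 1) * t) ^ 2 := by
      refine le_of_mul_le_mul_left ?_ (by linarith : 0 < n)
      calc n * μ i ^ 2 ≤ (n - 1) * b := card_mul_sq_le_of_sum_eq_zero h0 i
        _ = n * ((n - 1) * t) ^ 2 := by rw [← hbt]; ring
    exact (abs_le_of_sq_le_sq' hsq (mul_nonneg (by linarith) ht)).2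
  calc ∑ i, μ i ^ 3 ≤ (n - 3) * t * b + n * (n - 1) * t ^ 3 := sum_cube_le_of_le h0 hμ
    _ = (n - 2) / √(n * (n - 1)) * (b * √b) := by
        rw [show n * (n - 1) * t ^ 3 = t * b by rw [← hbt]; ring]
        simp only [t]
        ring

theorem abs_sum_cube_le (hn : 2 ≤ Fintype.card ι) {μ : ι → ℝ} (h0 : ∑ i, μ i = 0) :
    |∑ i, μ i ^ 3| ≤ (Fintype.card ι - 2) / √(Fintype.card ι * (Fintype.card ι - 1)) *
      ((∑ i, μ i ^ 2) * √(∑ i, μ i ^ 2)) := by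
  have hneg := sum_cube_le hn (μ := -μ) (by simp [h0])
  simp only [Pi.neg_apply, neg_sq, Odd.neg_pow (by decide : Odd 3), sum_neg_distrib] at hneg
  exact abs_le.mpr ⟨by linarith, sum_cube_le hn h0⟩

end Okumura

section PowerSums

variable {ι : Type*} [Fintype ι] (L : ι → ℝ)

lemma sum_sum_sq_sub_mul_add_mul (c : ℝ) :
    ∑ i, ∑ j, (L i - L j) ^ 2 * (c + L i * L j)
      = 2 * c * (Fintype.card ι * ∑ i, L i ^ 2 - (∑ i, L i) ^ 2)
        + 2 * (∑ i, L i) * (∑ i, L i ^ 3) - 2 * (∑ i, L i ^ 2) ^ 2 := by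
  have hexpand : ∀ i j, (L i - L j) ^ 2 * (c + L i * L j)
      = c * L i ^ 2 + (-2 * c * L i) * L j + c * L j ^ 2 + L i ^ 3 * L j
        + (-2 * L i ^ 2) * L j ^ 2 + L i * L j ^ 3 := fun i j => by ring
  simp only [hexpand, sum_add_distrib, ← mul_sum, ← sum_mul, sum_const, card_univ, nsmul_eq_mul]
  ring

lemma sum_sub_sq (f : ℝ) :
    ∑ i, (L i - f) ^ 2 = ∑ i, L i ^ 2 - 2 * f * ∑ i, L i + Fintype.card ι * f ^ 2 := by
  simp only [sub_sq, sum_add_distrib, sum_sub_distrib, ← mul_sum, ← sum_mul, sum_const, card_univ,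
    nsmul_eq_mul]
  ring

lemma sum_sub_cube (f : ℝ) :
    ∑ i, (L i - f) ^ 3
      = ∑ i, L i ^ 3 - 3 * f * ∑ i, L i ^ 2 + 3 * f ^ 2 * ∑ i, L i - Fintype.card ι * f ^ 3 := by
  have hexpand : ∀ i, (L i - f) ^ 3 = L i ^ 3 + (-3 * f) * L i ^ 2 + 3 * f ^ 2 * L i - f ^ 3 :=
    fun i => by ring
  simp only [hexpand, sum_add_distrib, sum_sub_distrib, ← mul_sum, sum_const, card_univ,
    nsmul_eq_mul]
  ring

end PowerSums

theorem okumura_gauss_estimate (m : ℕ) (hm : 2 ≤ m) (c : ℝ) (L : Fin m → ℝ)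
    (f a : ℝ) (hf : f = (1 / m) * ∑ i, L i) (ha : a = ∑ i, (L i) ^ 2) :
    -(1 / 2) * ∑ i, ∑ j, (L i - L j) ^ 2 * (c + L i * L j)
      ≤ (a - m * f ^ 2) * (a - m * c - 2 * m * f ^ 2
          + (m * (m - 2) / Real.sqrt (m * (m - 1))) * |f| * Real.sqrt (a - m * f ^ 2)) := by
  have hsum : ∑ i, L i = m * f := by
    rw [hf]; field_simp
  set μ : Fin m → ℝ := fun i => L i - f
  have hμ0 : ∑ i, μ i = 0 := by
    simp [μ, sum_sub_distrib, hsum]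
  have hμ2 : ∑ i, μ i ^ 2 = a - m * f ^ 2 := by
    rw [sum_sub_sq, Fintype.card_fin, hsum, ← ha]; ring
  have hμ3 : ∑ i, L i ^ 3 = ∑ i, μ i ^ 3 + 3 * f * a - 2 * m * f ^ 3 := by
    rw [sum_sub_cube, Fintype.card_fin, hsum, ← ha]; ring
  have hokumura := Okumura.abs_sum_cube_le (by simpa using hm) hμ0
  rw [hμ2, Fintype.card_fin] at hokumura
  have hcross : -(f * ∑ i, μ i ^ 3) ≤ |f| * |∑ i, μ i ^ 3| := by
    rw [← abs_mul]; exact neg_le_abs _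
  rw [sum_sum_sq_sub_mul_add_mul, Fintype.card_fin, hsum, hμ3, ← ha]
  linear_combination (m : ℝ) * hcross + (m * |f|) * hokumura
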